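/- Let f : Xⁿ → X be a transformed polynomial function. Then f is a polynomial function if and only if f is R_f-idempotent and δ_f is a lattice homomorphism whose range is a convex subset of X. -/
import Mathlib


/-- Lattice polynomial functions in `n` variables on a bounded distributive lattice. -/
inductive IsLatticePolynomial {L : Type*} [DistribLattice L] [BoundedOrder L] {n : ℕ} :
    ((Fin n → L) → L) → Prop
  | proj (i : Fin n) : IsLatticePolynomial (fun x => x i)
  | const (c : L) : IsLatticePolynomial (fun _ => c)
  | inf {p q : (Fin n → L) → L} :
      IsLatticePolynomial p → IsLatticePolynomial q → IsLatticePolynomial (fun x => p x ⊓ q x)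
  | sup {p q : (Fin n → L) → L} :
      IsLatticePolynomial p → IsLatticePolynomial q → IsLatticePolynomial (fun x => p x ⊔ q x)

/-- `f` is a transformed polynomial function. -/
def IsTransformedPolynomial {X Y : Type*} [DistribLattice X] [BoundedOrder X]
    [DistribLattice Y] [BoundedOrder Y] {n : ℕ} (f : (Fin n → X) → Y) : Prop :=
  ∃ (p : (Fin n → X) → X) (ψ : X → Y), IsLatticePolynomial p ∧ f = ψ ∘ p

/-- A subset `S` of a lattice is convex. -/
def IsConvexSet {X : Type*} [Lattice X] (S : Set X) : Prop :=
  ∀ a ∈ S, ∀ b ∈ S, ∀ c : X, a ≤ c → c ≤ b → c ∈ S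

lemma IsLatticePolynomial.monotone {L : Type*} [DistribLattice L] [BoundedOrder L] {n : ℕ}
    {p : (Fin n → L) → L} (hp : IsLatticePolynomial p) : Monotone p := by
  induction hp with
  | proj i => exact fun x y h => h i
  | const c => exact monotone_const
  | inf hp hq ihp ihq => exact fun x y h => inf_le_inf (ihp h) (ihq h)
  | sup hp hq ihp ihq => exact fun x y h => sup_le_sup (ihp h) (ihq h)

lemma diag_aux_sup {L : Type*} [DistribLattice L] {a b c d : L} (hab : a ≤ b) (hcd : c ≤ d)
    (t : L) : ((a ⊔ t) ⊓ b) ⊔ ((c ⊔ t) ⊓ d) = ((a ⊔ c) ⊔ t) ⊓ (b ⊔ d) := by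
  rw [inf_sup_right, inf_sup_right, inf_eq_left.mpr hab, inf_eq_left.mpr hcd,
    inf_sup_right, inf_eq_left.mpr (sup_le_sup hab hcd), inf_sup_left]
  ac_rfl

lemma IsLatticePolynomial.diag {L : Type*} [DistribLattice L] [BoundedOrder L] {n : ℕ}
    {p : (Fin n → L) → L} (hp : IsLatticePolynomial p) (t : L) :
    p (fun _ => t) = (p (fun _ => ⊥) ⊔ t) ⊓ p (fun _ => ⊤) := by
  induction hp with
  | proj i => simp
  | const c => simp
  | @inf p' q' hp hq ihp ihq =>
      beta_reduce
      rw [ihp, ihq]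
      calc ((p' _ ⊔ t) ⊓ p' _) ⊓ ((q' _ ⊔ t) ⊓ q' _)
          = ((p' _ ⊔ t) ⊓ (q' _ ⊔ t)) ⊓ (p' _ ⊓ q' _) := by ac_rfl
        _ = ((p' _ ⊓ q' _) ⊔ t) ⊓ (p' _ ⊓ q' _) := by rw [← sup_inf_right]
  | @sup p q hp hq ihp ihq =>
      beta_reduce
      rw [ihp, ihq]
      exact diag_aux_sup (hp.monotone (fun i => bot_le)) (hq.monotone (fun i => bot_le)) t

theorem statement_15 {X : Type*} [DistribLattice X] [BoundedOrder X] {n : ℕ} (hn : 0 < n)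
    (f : (Fin n → X) → X) (hf : IsTransformedPolynomial f) :
    IsLatticePolynomial f ↔
      ((∀ c ∈ Set.range f, f (fun _ => c) = c) ∧
       (∀ a b : X, f (fun _ => a ⊓ b) = f (fun _ => a) ⊓ f (fun _ => b) ∧
                   f (fun _ => a ⊔ b) = f (fun _ => a) ⊔ f (fun _ => b)) ∧
       IsConvexSet (Set.range (fun x : X => f (fun _ => x)))) := by
  obtain ⟨p, ψ, hp, hfp⟩ := hf
  constructor
  · intro hpoly
    have hd := hpoly.diag
    have hm := hpoly.monotone
    have hlo : ∀ x, f (fun _ => ⊥) ≤ f x := fun x => hm (fun i => bot_le)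
    have hhi : ∀ x, f x ≤ f (fun _ => ⊤) := fun x => hm (fun i => le_top)
    have hfix : ∀ c : X, f (fun _ => ⊥) ≤ c → c ≤ f (fun _ => ⊤) → f (fun _ => c) = c := by
      intro c h1 h2
      rw [hd c, sup_eq_right.mpr h1, inf_eq_left.mpr h2]
    refine ⟨?_, ?_, ?_⟩
    · rintro c ⟨x, rfl⟩
      exact hfix _ (hlo x) (hhi x)
    · intro a b
      constructor
      · rw [hd (a ⊓ b), hd a, hd b, sup_inf_left]
        ac_rfl
      · rw [hd (a ⊔ b), hd a, hd b, ← inf_sup_right]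
        congr 1
        ac_rfl
    · rintro a ⟨s, rfl⟩ b ⟨t, rfl⟩ c hac hcb
      refine ⟨c, hfix c ?_ ?_⟩
      · have h : f (fun _ => ⊥) ≤ f (fun _ => s) := by
          rw [hd s]; exact le_inf le_sup_left (hlo (fun _ => ⊤))
        exact h.trans hac
      · exact hcb.trans (hhi (fun _ => t))
  · rintro ⟨h1, h2, h3⟩
    set d0 := f (fun _ => ⊥) with hd0
    set d1 := f (fun _ => ⊤) with hd1
    have hmono : ∀ a b : X, a ≤ b → f (fun _ => a) ≤ f (fun _ => b) := by
      intro a b hab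
      have := (h2 a b).1
      rw [inf_eq_left.mpr hab] at this
      rw [this]
      exact inf_le_right
    have hd01 : d0 ≤ d1 := hmono _ _ bot_le
    have key : ∀ x : X, f (fun _ => x) = (d0 ⊔ x) ⊓ d1 := by
      intro x
      set m := (d0 ⊔ x) ⊓ d1 with hm
      have hm0 : d0 ≤ m := le_inf le_sup_left hd01
      have hm1 : m ≤ d1 := inf_le_right
      obtain ⟨s, hs⟩ := h3 d0 ⟨⊥, rfl⟩ d1 ⟨⊤, rfl⟩ m hm0 hm1
      have hfixm : f (fun _ => m) = m := h1 m ⟨_, hs⟩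
      have hcalc : f (fun _ => m) = f (fun _ => x) := by
        rw [hm, (h2 (d0 ⊔ x) d1).1, (h2 d0 x).2, h1 d0 ⟨_, rfl⟩, h1 d1 ⟨_, rfl⟩,
          sup_eq_right.mpr (hmono _ _ bot_le), inf_eq_left.mpr (hmono _ _ le_top)]
      rw [← hfixm, hcalc]
    have hfd : ∀ x, f x = (d0 ⊔ p x) ⊓ d1 := by
      intro x
      have hpx : p (fun _ => p x) = p x := by
        rw [hp.diag (p x), sup_eq_right.mpr (hp.monotone (fun i => bot_le)),
          inf_eq_left.mpr (hp.monotone (fun i => le_top))]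
      have : f x = f (fun _ => p x) := by
        rw [hfp]; simp only [Function.comp_apply, hpx]
      rw [this, key]
    have hfeq : f = fun x => (d0 ⊔ p x) ⊓ d1 := funext hfd
    rw [hfeq]
    exact .inf (.sup (.const d0) hp) (.const d1)
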